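/- arXiv:2605.21020 — 3 statements merged into one kernel-verified Lean document; each statement's English description precedes it below -/
import Mathlib

section
/- Let N be a positive integer and P_T > 0 a real number. Define the MiLAC-achievable covariance set R_MiLAC = { W * Wᴴ : W ∈ ℂ^{N×N}, and there exists p ∈ ℝ^N with p_m ≥ 0 for all m, diag(p) − Wᴴ * W positive semidefinite, and ∑_m p_m ≤ P_T }. Then R_MiLAC equals the set { R ∈ ℂ^{N×N} : R positive semidefinite and trace(R) ≤ P_T }. -/
open Matrix
open scoped ComplexOrder

/-!
If `diag(p) - Wᴴ W ⪰ 0` then `tr(W Wᴴ) = tr(Wᴴ W) ≤ tr(diag p) = ∑ p`, so every MiLAC covariance is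
PSD with trace at most `P_T`. Conversely, write a PSD `R = U D Uᴴ` with `U` unitary and `D` the
diagonal of its (nonnegative) eigenvalues, and take `W = U √D`: then `W Wᴴ = R` while `Wᴴ W = D`,
so `p` can be chosen as the eigenvalues, whose sum is `tr R ≤ P_T`.
-/

namespace Matrix

variable {n : Type*} [Fintype n]

theorem PosSemidef.trace_mul_conjTranspose_le {R : Type*} [CommRing R] [PartialOrder R]
    [StarRing R] [IsOrderedAddMonoid R] {A B : Matrix n n R} (h : (A - Bᴴ * B).PosSemidef) :
    (B * Bᴴ).trace ≤ A.trace := by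
  rw [trace_mul_comm, ← sub_nonneg, ← trace_sub]
  exact h.trace_nonneg

variable {𝕜 : Type*} [RCLike 𝕜] [DecidableEq n]

theorem PosSemidef.exists_mul_conjTranspose_eq_and_conjTranspose_mul_eq_diagonal
    {A : Matrix n n 𝕜} (hA : A.PosSemidef) :
    ∃ W : Matrix n n 𝕜, W * Wᴴ = A ∧
      Wᴴ * W = diagonal fun i ↦ (hA.isHermitian.eigenvalues i : 𝕜) := by
  set U : Matrix n n 𝕜 := (hA.isHermitian.eigenvectorUnitary : Matrix n n 𝕜)
  set S : Matrix n n 𝕜 := diagonal (fun i ↦ (√(hA.isHermitian.eigenvalues i) : 𝕜))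
  have hS : Sᴴ = S := by simp [S, diagonal_conjTranspose]
  have hSS : S * S = diagonal fun i ↦ (hA.isHermitian.eigenvalues i : 𝕜) := by
    simp only [S, diagonal_mul_diagonal, ← RCLike.ofReal_mul,
      Real.mul_self_sqrt (hA.eigenvalues_nonneg _)]
  have hUU : Uᴴ * U = 1 := Unitary.coe_star_mul_self hA.isHermitian.eigenvectorUnitary
  refine ⟨U * S, ?_, ?_⟩
  · rw [conjTranspose_mul, hS, mul_assoc, ← mul_assoc S, hSS, ← mul_assoc]
    exact hA.isHermitian.spectral_theorem.symm
  · rw [conjTranspose_mul, hS, mul_assoc, ← mul_assoc Uᴴ, hUU, one_mul, hSS]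

end Matrix

theorem milac_covariance_set_eq_digital_general (N : ℕ) (P_T : ℝ) :
    {R : Matrix (Fin N) (Fin N) ℂ |
        ∃ (W : Matrix (Fin N) (Fin N) ℂ) (p : Fin N → ℝ),
          (∀ m, 0 ≤ p m) ∧
          (Matrix.diagonal (fun m => (p m : ℂ)) - Wᴴ * W).PosSemidef ∧
          (∑ m, p m) ≤ P_T ∧ R = W * Wᴴ} =
      {R : Matrix (Fin N) (Fin N) ℂ | R.PosSemidef ∧ R.trace ≤ (P_T : ℂ)} := by
  ext R
  constructor
  · rintro ⟨W, p, -, hW, hp, rfl⟩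
    refine ⟨posSemidef_self_mul_conjTranspose W, ?_⟩
    calc (W * Wᴴ).trace ≤ (diagonal fun m ↦ (p m : ℂ)).trace := hW.trace_mul_conjTranspose_le
      _ = ((∑ m, p m : ℝ) : ℂ) := by simp
      _ ≤ P_T := by exact_mod_cast hp
  · rintro ⟨hR, htr⟩
    obtain ⟨W, hWW, hWD⟩ := hR.exists_mul_conjTranspose_eq_and_conjTranspose_mul_eq_diagonal
    refine ⟨W, hR.isHermitian.eigenvalues, hR.eigenvalues_nonneg, ?_, ?_, hWW.symm⟩
    · -- the two diagonals differ only in `RCLike.ofReal` versus `Complex.ofReal`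
      rw [hWD]
      convert PosSemidef.zero
      exact sub_eq_zero.mpr rfl
    · rw [← Complex.real_le_real]
      simpa [hR.isHermitian.trace_eq_sum_eigenvalues] using htr

/-- Theorem 1 of the paper: the set of MiLAC-achievable transmit covariance matrices
equals the set of PSD matrices with trace at most `P_T`. -/
theorem milac_covariance_set_eq_digital (N : ℕ) (hN : 0 < N) (P_T : ℝ) (hPT : 0 < P_T) :
    {R : Matrix (Fin N) (Fin N) ℂ |
        ∃ (W : Matrix (Fin N) (Fin N) ℂ) (p : Fin N → ℝ),
          (∀ m, 0 ≤ p m) ∧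
          (Matrix.diagonal (fun m => (p m : ℂ)) - Wᴴ * W).PosSemidef ∧
          (∑ m, p m) ≤ P_T ∧ R = W * Wᴴ} =
      {R : Matrix (Fin N) (Fin N) ℂ | R.PosSemidef ∧ R.trace ≤ (P_T : ℂ)} :=
  milac_covariance_set_eq_digital_general N P_T
end

section
/- Let R ∈ ℂ^{N×N} be Hermitian positive definite with positive definite square root R^{1/2}, let Δ ∈ ℂ^{N×N}, and let R^{1/2} * Δ = U * Σ * Vᴴ be a singular value decomposition (U, V unitary, Σ diagonal with nonnegative real entries). Then X* = R^{1/2} * U * Vᴴ satisfies X* * X*ᴴ = R, and for every X ∈ ℂ^{N×N} with X * Xᴴ = R it holds that ‖X* − Δ‖_F ≤ ‖X − Δ‖_F. -/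
/-!
Since every feasible `X` has `X Xᴴ = R`, expanding `‖X - Δ‖²_F` leaves only the cross term
`-2 Re tr (X Δᴴ)` depending on `X`. Writing `X = S Q` with `Q` unitary, this term is
`Re tr (Q (S Δ)ᴴ) = Re tr (W Σ)` with `W = Uᴴ Q V` unitary, which is at most `∑ σᵢ` because the
entries of a unitary matrix have modulus at most `1`; `Q = U Vᴴ` gives `W = 1` and attains it.
-/

open Matrix
open scoped ComplexOrder

namespace Matrix

variable {n 𝕜 : Type*} [Fintype n] [RCLike 𝕜]

theorem re_trace_sub_mul_conjTranspose_sub (X Δ : Matrix n n 𝕜) :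
    RCLike.re ((X - Δ) * (X - Δ)ᴴ).trace
      = RCLike.re (X * Xᴴ).trace - 2 * RCLike.re (X * Δᴴ).trace
        + RCLike.re (Δ * Δᴴ).trace := by
  have hcross : (Δ * Xᴴ).trace = star (X * Δᴴ).trace := by
    rw [← trace_conjTranspose, conjTranspose_mul, conjTranspose_conjTranspose]
  simp only [conjTranspose_sub, sub_mul, mul_sub, trace_sub, map_sub, hcross]
  rw [RCLike.star_def, RCLike.conj_re]
  ring

theorem trace_mul_mul_conjTranspose_of_isHermitian {S : Matrix n n 𝕜} (hS : S.IsHermitian)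
    (Q Δ : Matrix n n 𝕜) : (S * Q * Δᴴ).trace = (Q * (S * Δ)ᴴ).trace := by
  rw [conjTranspose_mul, hS.eq, Matrix.mul_assoc, trace_mul_comm, Matrix.mul_assoc]

variable [DecidableEq n]

theorem mul_unitary_mul_conjTranspose (S : Matrix n n 𝕜) {Q : Matrix n n 𝕜}
    (hQ : Q ∈ unitaryGroup n 𝕜) : S * Q * (S * Q)ᴴ = S * Sᴴ := by
  rw [conjTranspose_mul, Matrix.mul_assoc, ← Matrix.mul_assoc Q, ← star_eq_conjTranspose Q,
    mem_unitaryGroup_iff.mp hQ, Matrix.one_mul]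

theorem exists_unitary_eq_mul_of_mul_conjTranspose_eq {S X : Matrix n n 𝕜} (hS : IsUnit S)
    (hX : X * Xᴴ = S * Sᴴ) : ∃ Q ∈ unitaryGroup n 𝕜, X = S * Q := by
  have hdet : IsUnit S.det := (isUnit_iff_isUnit_det S).mp hS
  refine ⟨S⁻¹ * X, ?_, by rw [mul_nonsing_inv_cancel_left _ _ hdet]⟩
  rw [mem_unitaryGroup_iff, star_eq_conjTranspose, conjTranspose_mul, conjTranspose_nonsing_inv]
  calc S⁻¹ * X * (Xᴴ * Sᴴ⁻¹) = S⁻¹ * (X * Xᴴ) * Sᴴ⁻¹ := by simp only [Matrix.mul_assoc]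
    _ = (S⁻¹ * S) * (Sᴴ * Sᴴ⁻¹) := by rw [hX]; simp only [Matrix.mul_assoc]
    _ = 1 := by
      rw [nonsing_inv_mul _ hdet, ← conjTranspose_nonsing_inv, ← conjTranspose_mul,
        nonsing_inv_mul _ hdet, conjTranspose_one, Matrix.one_mul]

theorem re_trace_unitary_mul_diagonal_le {W : Matrix n n 𝕜} (hW : W ∈ unitaryGroup n 𝕜)
    {σ : n → ℝ} (hσ : ∀ i, 0 ≤ σ i) :
    RCLike.re (W * diagonal fun i => (σ i : 𝕜)).trace ≤ ∑ i, σ i := by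
  simp only [trace, diag, mul_diagonal, map_sum, RCLike.re_mul_ofReal]
  gcongr with i
  exact mul_le_of_le_one_left (hσ i)
    ((RCLike.re_le_norm _).trans (entry_norm_bound_of_unitary hW i i))

section Procrustes

variable {U V : Matrix n n 𝕜} (hU : U ∈ unitaryGroup n 𝕜) (hV : V ∈ unitaryGroup n 𝕜)
include hU hV

theorem re_trace_unitary_mul_conjTranspose_svd_le {Q : Matrix n n 𝕜}
    (hQ : Q ∈ unitaryGroup n 𝕜) {σ : n → ℝ} (hσ : ∀ i, 0 ≤ σ i) :
    RCLike.re (Q * (U * (diagonal fun i => (σ i : 𝕜)) * Vᴴ)ᴴ).trace ≤ ∑ i, σ i := by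
  have hW : star U * Q * V ∈ unitaryGroup n 𝕜 := mul_mem (mul_mem (Unitary.star_mem hU) hQ) hV
  have hD : (diagonal fun i => (σ i : 𝕜))ᴴ = diagonal fun i => (σ i : 𝕜) := by
    simp [diagonal_conjTranspose]
  convert re_trace_unitary_mul_diagonal_le hW hσ using 2
  simp only [conjTranspose_mul, conjTranspose_conjTranspose, hD, star_eq_conjTranspose,
    Matrix.mul_assoc]
  rw [trace_mul_comm Uᴴ]
  simp only [Matrix.mul_assoc]

theorem re_trace_mul_conjTranspose_svd (σ : n → ℝ) :
    RCLike.re ((U * Vᴴ) * (U * (diagonal fun i => (σ i : 𝕜)) * Vᴴ)ᴴ).trace = ∑ i, σ i := by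
  have hVV : Vᴴ * V = 1 := hV.1
  have hUU : Uᴴ * U = 1 := hU.1
  rw [conjTranspose_mul, conjTranspose_mul, conjTranspose_conjTranspose, Matrix.mul_assoc,
    ← Matrix.mul_assoc Vᴴ, hVV, Matrix.one_mul, trace_mul_comm,
    Matrix.mul_assoc, hUU, Matrix.mul_one]
  simp [diagonal_conjTranspose, trace_diagonal]

end Procrustes

end Matrix

theorem pdd_subproblem_closed_form_general (N : ℕ)
    (R S Δ U V : Matrix (Fin N) (Fin N) ℂ) (σ : Fin N → ℝ)
    (hS : S.PosDef) (hSS : S * S = R)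
    (hσ : ∀ i, 0 ≤ σ i)
    (hU : U ∈ Matrix.unitaryGroup (Fin N) ℂ)
    (hV : V ∈ Matrix.unitaryGroup (Fin N) ℂ)
    (hSVD : S * Δ = U * Matrix.diagonal (fun i => (σ i : ℂ)) * Vᴴ) :
    (S * (U * Vᴴ)) * (S * (U * Vᴴ))ᴴ = R ∧
    (∀ X : Matrix (Fin N) (Fin N) ℂ, X * Xᴴ = R →
      (((S * (U * Vᴴ) - Δ) * (S * (U * Vᴴ) - Δ)ᴴ).trace).re
        ≤ (((X - Δ) * (X - Δ)ᴴ).trace).re) := by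
  have hRS : R = S * Sᴴ := by rw [hS.isHermitian.eq, hSS]
  have hUV : U * Vᴴ ∈ unitaryGroup (Fin N) ℂ := mul_mem hU (Unitary.star_mem hV)
  have hopt : S * (U * Vᴴ) * (S * (U * Vᴴ))ᴴ = R :=
    (mul_unitary_mul_conjTranspose S hUV).trans hRS.symm
  refine ⟨hopt, fun X hX => ?_⟩
  obtain ⟨Q, hQ, rfl⟩ := exists_unitary_eq_mul_of_mul_conjTranspose_eq hS.isUnit (hX.trans hRS)
  simp only [← RCLike.re_to_complex, re_trace_sub_mul_conjTranspose_sub, hopt, hX,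
    trace_mul_mul_conjTranspose_of_isHermitian hS.isHermitian, hSVD]
  gcongr _ - 2 * ?_ + _
  exact (re_trace_unitary_mul_conjTranspose_svd_le hU hV hQ hσ).trans
    (re_trace_mul_conjTranspose_svd hU hV σ).ge

/-- Closed-form solution of subproblem P7: for Hermitian positive definite `R`
with positive definite square root `S = R^{1/2}`, and an SVD `S Δ = U Σ Vᴴ`,
the matrix `X* = S U Vᴴ` satisfies `X* X*ᴴ = R` and minimizes the Frobenius
distance to `Δ` over `{X : X Xᴴ = R}`. -/
theorem pdd_subproblem_closed_form (N : ℕ)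
    (R S Δ U V : Matrix (Fin N) (Fin N) ℂ) (σ : Fin N → ℝ)
    (hR : R.PosDef) (hS : S.PosDef) (hSS : S * S = R)
    (hσ : ∀ i, 0 ≤ σ i)
    (hU : U ∈ Matrix.unitaryGroup (Fin N) ℂ)
    (hV : V ∈ Matrix.unitaryGroup (Fin N) ℂ)
    (hSVD : S * Δ = U * Matrix.diagonal (fun i => (σ i : ℂ)) * Vᴴ) :
    (S * (U * Vᴴ)) * (S * (U * Vᴴ))ᴴ = R ∧
    (∀ X : Matrix (Fin N) (Fin N) ℂ, X * Xᴴ = R →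
      (((S * (U * Vᴴ) - Δ) * (S * (U * Vᴴ) - Δ)ᴴ).trace).re
        ≤ (((X - Δ) * (X - Δ)ᴴ).trace).re) :=
  pdd_subproblem_closed_form_general N R S Δ U V σ hS hSS hσ hU hV hSVD
end

section
/- Let N_x, N_y be positive integers, N = N_x N_y, and let F_DFT ∈ ℂ^{N×N} be the normalized 2D DFT matrix. Consider the feasible set of receiver-side MiLAC transfer matrices V = (1/2)·[Θ]_{N+1:2N, 1:N} where Θ ∈ ℂ^{2N×2N} ranges over all matrices with Θᵀ = Θ and Θᴴ Θ = I. Then the minimum over this feasible set and over scaling factors β ∈ ℂ of ‖β·V − F_DFT‖_F² equals 0, and it is attained at V = (1/2)·F_DFT, β = 2, with Θ = [[0, F_DFTᵀ],[F_DFT, 0]]. -/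
/-!
The 2D DFT matrix is, after the reindexing `n ↦ (n % Nx, n / Nx)`, the Kronecker product of
the 1D DFT matrices of sizes `Nx` and `Ny`. Each 1D DFT matrix is unitary because every entry of
its Gram matrix is a geometric sum of a root of unity, so `F` is unitary. For unitary `F` the matrix
`Θ = [[0, Fᵀ], [F, 0]]` is symmetric and unitary with lower-left block `F`, so `β = 2` makes
the objective vanish; and the objective is a squared Frobenius norm, hence nonnegative.
-/

open Matrix Complex
open scoped Real Kronecker

section

variable {m n α : Type*} [Fintype m] [Fintype n] [DecidableEq m] [DecidableEq n]

theorem submatrix_mem_unitary [Semiring α] [StarRing α] {U : Matrix n n α}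
    (hU : U ∈ unitary (Matrix n n α)) (e : m ≃ n) :
    U.submatrix e e ∈ unitary (Matrix m m α) := by
  rw [Unitary.mem_iff, star_eq_conjTranspose, conjTranspose_submatrix, submatrix_mul_equiv,
    submatrix_mul_equiv, ← star_eq_conjTranspose, hU.1, hU.2, submatrix_one_equiv]
  exact ⟨rfl, rfl⟩

theorem fromBlocks_zero_transpose_self_zero_mem_unitary [CommSemiring α] [StarRing α]
    {U : Matrix n n α} (hU : U ∈ unitary (Matrix n n α)) :
    fromBlocks 0 Uᵀ U 0 ∈ unitary (Matrix (n ⊕ n) (n ⊕ n) α) := by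
  have hUU : Uᴴ * U = 1 := hU.1
  have hUU' : U * Uᴴ = 1 := hU.2
  have hUtUt : Uᵀᴴ * Uᵀ = 1 := by
    rw [← transpose_one, ← hUU', transpose_mul]
    rfl
  have hUtUt' : Uᵀ * Uᵀᴴ = 1 := by
    rw [← transpose_one, ← hUU, transpose_mul]
    rfl
  rw [Unitary.mem_iff, star_eq_conjTranspose, fromBlocks_conjTranspose, fromBlocks_multiply,
    fromBlocks_multiply]
  simp [hUU, hUU', hUtUt, hUtUt']

end

theorem transpose_fromBlocks_zero_transpose_self_zero {n α : Type*} [Zero α] (U : Matrix n n α) :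
    (fromBlocks 0 Uᵀ U 0)ᵀ = fromBlocks 0 Uᵀ U 0 := by
  simp [fromBlocks_transpose]

open scoped ComplexOrder in
theorem re_trace_mul_conjTranspose_nonneg {m n : Type*} [Fintype m] [Fintype n]
    (M : Matrix m n ℂ) : 0 ≤ (M * Mᴴ).trace.re :=
  (Complex.nonneg_iff.mp (posSemidef_self_mul_conjTranspose M).trace_nonneg).1

noncomputable def dftMatrix (n : ℕ) : Matrix (Fin n) (Fin n) ℂ :=
  of fun j k => 1 / (Real.sqrt n : ℂ) * exp (-2 * π * I * (j : ℕ) * (k : ℕ) / n)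

theorem star_dftMatrix_mul_dftMatrix (n : ℕ) (j k k' : Fin n) :
    star (dftMatrix n j k) * dftMatrix n j k' =
      (n : ℂ)⁻¹ * (exp (2 * π * I / n) ^ (k : ℕ) / exp (2 * π * I / n) ^ (k' : ℕ)) ^ (j : ℕ) := by
  have hsqrt : ((Real.sqrt n : ℝ) : ℂ) * (Real.sqrt n : ℝ) = n := by
    rw [← ofReal_mul, Real.mul_self_sqrt n.cast_nonneg, ofReal_natCast]
  simp only [dftMatrix, of_apply, star_mul', ← exp_conj, star_div₀, star_one, Complex.star_def,
    conj_ofReal, map_mul, map_div₀, map_neg, map_ofNat, conj_I, conj_natCast]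
  rw [← exp_nat_mul, ← exp_nat_mul, ← exp_sub, ← exp_nat_mul, mul_mul_mul_comm, ← exp_add,
    div_mul_div_comm, one_mul, hsqrt, one_div]
  congr 2
  ring

theorem conjTranspose_dftMatrix_mul_self (n : ℕ) : (dftMatrix n)ᴴ * dftMatrix n = 1 := by
  ext k k'
  have hn : n ≠ 0 := k.pos.ne'
  have hζ := isPrimitiveRoot_exp n hn
  set ζ := exp (2 * π * I / n)
  set w := ζ ^ (k : ℕ) / ζ ^ (k' : ℕ) with hw
  rw [mul_apply]
  simp only [conjTranspose_apply, star_dftMatrix_mul_dftMatrix, ← Finset.mul_sum]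
  rw [Fin.sum_univ_eq_sum_range (w ^ ·) n]
  by_cases h : k = k'
  · subst h
    simp [w, hζ.ne_zero hn, hn]
  · have hw1 : w ≠ 1 := fun hw1 => h <| Fin.ext <| hζ.pow_inj k.isLt k'.isLt <|
      (div_eq_one_iff_eq (pow_ne_zero _ (hζ.ne_zero hn))).mp hw1
    have hwn : w ^ n = 1 := by
      rw [hw, div_pow, ← pow_mul, ← pow_mul, pow_mul', pow_mul' ζ, hζ.pow_eq_one, one_pow, one_pow,
        div_one]
    rw [geom_sum_eq hw1, hwn, sub_self, zero_div, mul_zero, one_apply_ne h]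

theorem dftMatrix_mem_unitary (n : ℕ) : dftMatrix n ∈ unitary (Matrix (Fin n) (Fin n) ℂ) :=
  mem_unitaryGroup_iff'.mpr (conjTranspose_dftMatrix_mul_self n)

def finMulEquivModDiv (p q : ℕ) : Fin (p * q) ≃ Fin p × Fin q :=
  (finCongr (Nat.mul_comm p q)).trans (finProdFinEquiv.symm.trans (Equiv.prodComm _ _))

noncomputable def dft2Matrix (p q : ℕ) : Matrix (Fin (p * q)) (Fin (p * q)) ℂ :=
  (dftMatrix p ⊗ₖ dftMatrix q).submatrix (finMulEquivModDiv p q) (finMulEquivModDiv p q)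

theorem dft2Matrix_mem_unitary (p q : ℕ) :
    dft2Matrix p q ∈ unitary (Matrix (Fin (p * q)) (Fin (p * q)) ℂ) :=
  submatrix_mem_unitary (kronecker_mem_unitary (dftMatrix_mem_unitary p) (dftMatrix_mem_unitary q)) _

theorem dft2Matrix_apply (p q : ℕ) (n n' : Fin (p * q)) :
    dft2Matrix p q n n' = (1 / (Real.sqrt (p * q) : ℂ)) *
        Complex.exp (-2 * (Real.pi : ℂ) * Complex.I *
          (((n : ℕ) % p : ℕ) : ℂ) * (((n' : ℕ) % p : ℕ) : ℂ) / (p : ℂ)) *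
        Complex.exp (-2 * (Real.pi : ℂ) * Complex.I *
          (((n : ℕ) / p : ℕ) : ℂ) * (((n' : ℕ) / p : ℕ) : ℂ) / (q : ℂ)) := by
  simp [dft2Matrix, finMulEquivModDiv, dftMatrix, Real.sqrt_mul p.cast_nonneg]
  ring

theorem receiver_milac_exact_2d_dft_general (Nx Ny : ℕ)
    (F : Matrix (Fin (Nx * Ny)) (Fin (Nx * Ny)) ℂ)
    (hF : ∀ n n' : Fin (Nx * Ny),
      F n n' = (1 / (Real.sqrt (Nx * Ny) : ℂ)) *
        Complex.exp (-2 * (Real.pi : ℂ) * Complex.I *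
          (((n : ℕ) % Nx : ℕ) : ℂ) * (((n' : ℕ) % Nx : ℕ) : ℂ) / (Nx : ℂ)) *
        Complex.exp (-2 * (Real.pi : ℂ) * Complex.I *
          (((n : ℕ) / Nx : ℕ) : ℂ) * (((n' : ℕ) / Nx : ℕ) : ℂ) / (Ny : ℂ))) :
    IsLeast
      {c : ℝ |
        ∃ (Θ : Matrix (Fin (Nx * Ny) ⊕ Fin (Nx * Ny)) (Fin (Nx * Ny) ⊕ Fin (Nx * Ny)) ℂ)
          (β : ℂ), Θᵀ = Θ ∧ Θᴴ * Θ = 1 ∧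
          c = (((β • ((1 / 2 : ℂ) • Θ.toBlocks₂₁) - F) *
                (β • ((1 / 2 : ℂ) • Θ.toBlocks₂₁) - F)ᴴ).trace).re} 0 ∧
    (Matrix.fromBlocks 0 Fᵀ F 0)ᵀ = Matrix.fromBlocks (0 : Matrix (Fin (Nx * Ny)) (Fin (Nx * Ny)) ℂ) Fᵀ F 0 ∧
    (Matrix.fromBlocks (0 : Matrix (Fin (Nx * Ny)) (Fin (Nx * Ny)) ℂ) Fᵀ F 0)ᴴ *
        Matrix.fromBlocks (0 : Matrix (Fin (Nx * Ny)) (Fin (Nx * Ny)) ℂ) Fᵀ F 0 = 1 ∧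
    ((((2 : ℂ) • ((1 / 2 : ℂ) •
          (Matrix.fromBlocks (0 : Matrix (Fin (Nx * Ny)) (Fin (Nx * Ny)) ℂ) Fᵀ F 0).toBlocks₂₁) - F) *
        ((2 : ℂ) • ((1 / 2 : ℂ) •
          (Matrix.fromBlocks (0 : Matrix (Fin (Nx * Ny)) (Fin (Nx * Ny)) ℂ) Fᵀ F 0).toBlocks₂₁) - F)ᴴ).trace).re
      = 0 := by
  have hFU : F ∈ unitary _ := by
    convert dft2Matrix_mem_unitary Nx Ny
    exact ext fun n n' => (hF n n').trans (dft2Matrix_apply Nx Ny n n').symm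
  have hsymm := transpose_fromBlocks_zero_transpose_self_zero F
  have hunitary := (fromBlocks_zero_transpose_self_zero_mem_unitary hFU).1
  refine ⟨⟨⟨_, 2, hsymm, hunitary, by simp⟩, ?_⟩, hsymm, hunitary, by simp⟩
  rintro c ⟨Θ, β, -, -, rfl⟩
  exact re_trace_mul_conjTranspose_nonneg _

/-- Receiver-side MiLAC design (problem P12): over lossless (`Θᴴ Θ = I`) and
reciprocal (`Θᵀ = Θ`) scattering matrices with transfer matrix
`V = (1/2)[Θ]_{N+1:2N,1:N}` and scalings `β ∈ ℂ`, the minimum of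
`‖β V − F_DFT‖_F²` is `0`, attained at `V = (1/2) F_DFT`, `β = 2`, with
`Θ = [[0, F_DFTᵀ],[F_DFT, 0]]`. -/
theorem receiver_milac_exact_2d_dft (Nx Ny : ℕ) (hx : 0 < Nx) (hy : 0 < Ny)
    (F : Matrix (Fin (Nx * Ny)) (Fin (Nx * Ny)) ℂ)
    (hF : ∀ n n' : Fin (Nx * Ny),
      F n n' = (1 / (Real.sqrt (Nx * Ny) : ℂ)) *
        Complex.exp (-2 * (Real.pi : ℂ) * Complex.I *
          (((n : ℕ) % Nx : ℕ) : ℂ) * (((n' : ℕ) % Nx : ℕ) : ℂ) / (Nx : ℂ)) *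
        Complex.exp (-2 * (Real.pi : ℂ) * Complex.I *
          (((n : ℕ) / Nx : ℕ) : ℂ) * (((n' : ℕ) / Nx : ℕ) : ℂ) / (Ny : ℂ))) :
    IsLeast
      {c : ℝ |
        ∃ (Θ : Matrix (Fin (Nx * Ny) ⊕ Fin (Nx * Ny)) (Fin (Nx * Ny) ⊕ Fin (Nx * Ny)) ℂ)
          (β : ℂ), Θᵀ = Θ ∧ Θᴴ * Θ = 1 ∧
          c = (((β • ((1 / 2 : ℂ) • Θ.toBlocks₂₁) - F) *
                (β • ((1 / 2 : ℂ) • Θ.toBlocks₂₁) - F)ᴴ).trace).re} 0 ∧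
    (Matrix.fromBlocks 0 Fᵀ F 0)ᵀ = Matrix.fromBlocks (0 : Matrix (Fin (Nx * Ny)) (Fin (Nx * Ny)) ℂ) Fᵀ F 0 ∧
    (Matrix.fromBlocks (0 : Matrix (Fin (Nx * Ny)) (Fin (Nx * Ny)) ℂ) Fᵀ F 0)ᴴ *
        Matrix.fromBlocks (0 : Matrix (Fin (Nx * Ny)) (Fin (Nx * Ny)) ℂ) Fᵀ F 0 = 1 ∧
    ((((2 : ℂ) • ((1 / 2 : ℂ) •
          (Matrix.fromBlocks (0 : Matrix (Fin (Nx * Ny)) (Fin (Nx * Ny)) ℂ) Fᵀ F 0).toBlocks₂₁) - F) *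
        ((2 : ℂ) • ((1 / 2 : ℂ) •
          (Matrix.fromBlocks (0 : Matrix (Fin (Nx * Ny)) (Fin (Nx * Ny)) ℂ) Fᵀ F 0).toBlocks₂₁) - F)ᴴ).trace).re
      = 0 :=
  receiver_milac_exact_2d_dft_general Nx Ny F hF
end
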